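/- arXiv:1009.1768 — 3 statements merged into one kernel-verified Lean document; each statement's English description precedes it below -/
import Mathlib

section
/- Let X be an invertible symmetric 3×3 matrix over GF(2) with X ≠ 𝟙 and det(X + 𝟙) = 0. Then the rank of X + 𝟙 is 1 or 2; it equals 1 (i.e., the eigenspace of X for eigenvalue 1 is 2-dimensional) if and only if X² = 𝟙. Moreover, there are exactly 3 such involutions X. -/
/-!
Put `A = X + 1`; in characteristic 2, `X = 1 + A` and `X ^ 2 + 1 = A * A`. Since `X ≠ 1` and
`det A = 0`, the rank of `A` is 1 or 2. If `A * A = 0`, then the range of `A` lies in its kernel,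
so `2 rank A ≤ 3` and `rank A = 1`. Conversely, a rank-one `A` is `u vᵀ`. Then `A * A = (v ⬝ u) A`
and, by the matrix determinant lemma, `det X = 1 + v ⬝ u`, so `det X = 1` forces `A * A = 0`.
-/

open Matrix

theorem CharTwo.add_one_mul_self {R : Type*} [Ring R] [CharP R 2] (x : R) :
    (x + 1) * (x + 1) = x ^ 2 + 1 := by
  rw [← sq, (Commute.one_right x).add_sq, mul_one, CharTwo.two_eq_zero (R := R), zero_mul,
    add_zero, one_pow]

namespace Matrix

section Field

variable {m n K : Type*} [Finite m] [Fintype n] [Field K]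

theorem exists_eq_vecMulVec_of_rank_le_one {A : Matrix m n K} (hA : A.rank ≤ 1) :
    ∃ u v, A = vecMulVec u v := by
  rw [rank_eq_finrank_span_cols, Submodule.finrank_le_one_iff_isPrincipal] at hA
  obtain ⟨u, hu⟩ := hA.principal
  have hcol : ∀ j, ∃ c : K, c • u = A.col j := fun j =>
    Submodule.mem_span_singleton.mp (hu ▸ Submodule.subset_span ⟨j, rfl⟩)
  choose c hc using hcol
  refine ⟨u, c, ext fun i j => ?_⟩
  rw [vecMulVec_apply, mul_comm, ← col_apply A j i, ← hc j, Pi.smul_apply, smul_eq_mul]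

theorem rank_pos_of_ne_zero {A : Matrix m n K} (hA : A ≠ 0) : 0 < A.rank := by
  rw [Nat.pos_iff_ne_zero, rank_eq_finrank_span_cols, ne_eq, Submodule.finrank_eq_zero,
    Submodule.span_eq_bot]
  refine fun h => hA (ext fun i j => ?_)
  simpa using congrFun (h _ ⟨j, rfl⟩) i

theorem rank_lt_card_of_det_eq_zero [DecidableEq n] {A : Matrix n n K} (hA : A.det = 0) :
    A.rank < Fintype.card n := by
  refine (rank_le_card_width A).lt_of_ne fun h => ?_
  rw [rank_eq_finrank_span_cols] at h
  have hind : LinearIndependent K A.col := linearIndependent_iff_card_eq_finrank_span.mpr h.symm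
  rw [linearIndependent_cols_iff_isUnit, isUnit_iff_isUnit_det, hA] at hind
  exact not_isUnit_zero hind

theorem det_one_add_vecMulVec [DecidableEq n] (u v : n → K) :
    (1 + vecMulVec u v).det = 1 + v ⬝ᵥ u := by
  rw [vecMulVec_eq Unit, det_one_add_replicateCol_mul_replicateRow]

theorem mul_self_eq_zero_of_rank_le_one_of_det_one_add [DecidableEq n] {A : Matrix n n K}
    (hA : A.rank ≤ 1) (hdet : (1 + A).det = 1) : A * A = 0 := by
  obtain ⟨u, v, rfl⟩ := exists_eq_vecMulVec_of_rank_le_one hA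
  have hvu : v ⬝ᵥ u = 0 := by rwa [det_one_add_vecMulVec, add_eq_left] at hdet
  rw [vecMulVec_mul_vecMulVec, hvu, zero_smul, vecMulVec_zero]

end Field

section CharTwo

variable {n K : Type*} [Fintype n] [DecidableEq n] [Nonempty n] [Field K] [CharP K 2]

theorem sq_eq_one_of_rank_add_one_le_one {X : Matrix n n K} (hrank : (X + 1).rank ≤ 1)
    (hdet : X.det = 1) : X ^ 2 = 1 := by
  have hX : 1 + (X + 1) = X := by rw [add_comm X, CharTwo.add_cancel_left]
  have h := mul_self_eq_zero_of_rank_le_one_of_det_one_add hrank (by rwa [hX])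
  rwa [CharTwo.add_one_mul_self, CharTwo.add_eq_zero] at h

theorem two_mul_rank_add_one_le_card_of_sq_eq_one {X : Matrix n n K} (hX : X ^ 2 = 1) :
    2 * (X + 1).rank ≤ Fintype.card n := by
  rw [two_mul]
  refine rank_add_rank_le_card_of_mul_eq_zero ?_
  rw [CharTwo.add_one_mul_self, hX, CharTwo.add_self_eq_zero]

end CharTwo

end Matrix

-- These are the `1 + u uᵀ` with `u ∈ {110, 101, 011}`; the count is checked over all 512 matrices.
theorem card_symmetric_involutions_with_eigenvalue_one :
    Nat.card {X : Matrix (Fin 3) (Fin 3) (ZMod 2) //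
      X = Xᵀ ∧ X.det = 1 ∧ X ≠ 1 ∧ (X + 1).det = 0 ∧ X ^ 2 = 1} = 3 := by
  rw [Nat.card_eq_fintype_card]
  decide

/-- For an invertible symmetric 3×3 matrix `X ≠ 1` over GF(2) with eigenvalue 1
(i.e. `det (X + 1) = 0`), the rank of `X + 1` is 1 or 2, and it equals 1 iff `X ^ 2 = 1`.
Moreover there are exactly 3 such involutions. -/
theorem rank_of_eigenvalue_one_matrices :
    (∀ X : Matrix (Fin 3) (Fin 3) (ZMod 2),
      X = Xᵀ → X.det = 1 → X ≠ 1 → (X + 1).det = 0 →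
        ((X + 1).rank = 1 ∨ (X + 1).rank = 2) ∧ ((X + 1).rank = 1 ↔ X ^ 2 = 1)) ∧
    Nat.card {X : Matrix (Fin 3) (Fin 3) (ZMod 2) //
        X = Xᵀ ∧ X.det = 1 ∧ X ≠ 1 ∧ (X + 1).det = 0 ∧ X ^ 2 = 1} = 3 := by
  refine ⟨fun X _ hdet hne hsing => ?_, card_symmetric_involutions_with_eigenvalue_one⟩
  have hpos : 0 < (X + 1).rank := rank_pos_of_ne_zero (mt CharTwo.add_eq_zero.mp hne)
  have hlt : (X + 1).rank < 3 := by simpa using rank_lt_card_of_det_eq_zero hsing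
  have hsq : (X + 1).rank ≤ 1 ↔ X ^ 2 = 1 := by
    refine ⟨fun h => sq_eq_one_of_rank_add_one_le_one h hdet, fun h => ?_⟩
    have h2 := two_mul_rank_add_one_le_card_of_sq_eq_one h
    rw [Fintype.card_fin] at h2
    omega
  exact ⟨by omega, by rw [← hsq]; omega⟩
end

section
/- For every symmetric 3×3 matrix X over GF(2), det X = q₀(α(X)), where q₀(x₁,…,x₆) = x₁x₂ + x₃x₄ + x₅x₆. -/
/-!
In characteristic 2 the determinant of a symmetric matrix `[[a,b,c],[b,d,e],[c,e,f]]` is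
`adf + ae² + dc² + fb²`. Over GF(2) squaring is the identity, and expanding `q₀(α(X))` gives
`3adf + ae + dc + fb`, the same polynomial.
-/

open Matrix

/-- The coordinate map `α`. -/
def alphaMap (X : Matrix (Fin 3) (Fin 3) (ZMod 2)) : Fin 6 → ZMod 2 :=
  ![X 0 0, X 1 2 + X 1 1 * X 2 2, X 1 1, X 0 2 + X 0 0 * X 2 2, X 2 2,
    X 0 1 + X 0 0 * X 1 1]

/-- The quadratic form `q₀(x) = x₁x₂ + x₃x₄ + x₅x₆` on GF(2)^6. -/
def q0 (x : Fin 6 → ZMod 2) : ZMod 2 := x 0 * x 1 + x 2 * x 3 + x 4 * x 5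

theorem Matrix.IsSymm.det_fin_three {R : Type*} [CommRing R] {X : Matrix (Fin 3) (Fin 3) R}
    (hX : X.IsSymm) :
    X.det = X 0 0 * X 1 1 * X 2 2 + 2 * X 0 1 * X 0 2 * X 1 2
      - X 0 0 * X 1 2 ^ 2 - X 1 1 * X 0 2 ^ 2 - X 2 2 * X 0 1 ^ 2 := by
  rw [Matrix.det_fin_three, ← hX.apply 0 1, ← hX.apply 0 2, ← hX.apply 1 2]
  ring

theorem Matrix.IsSymm.det_fin_three_of_charTwo {R : Type*} [CommRing R] [CharP R 2]
    {X : Matrix (Fin 3) (Fin 3) R} (hX : X.IsSymm) :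
    X.det = X 0 0 * X 1 1 * X 2 2
      + X 0 0 * X 1 2 ^ 2 + X 1 1 * X 0 2 ^ 2 + X 2 2 * X 0 1 ^ 2 := by
  rw [hX.det_fin_three]
  linear_combination (X 0 1 * X 0 2 * X 1 2 - X 0 0 * X 1 2 ^ 2 - X 1 1 * X 0 2 ^ 2
    - X 2 2 * X 0 1 ^ 2) * CharTwo.two_eq_zero (R := R)

theorem q0_alphaMap (X : Matrix (Fin 3) (Fin 3) (ZMod 2)) :
    q0 (alphaMap X) = X 0 0 * X 1 1 * X 2 2
      + X 0 0 * X 1 2 + X 1 1 * X 0 2 + X 2 2 * X 0 1 := by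
  simp only [q0, alphaMap, cons_val]
  linear_combination (X 0 0 * X 1 1 * X 2 2) * CharTwo.two_eq_zero (R := ZMod 2)

/-- For every symmetric 3×3 matrix `X` over GF(2), `det X = q₀(α(X))`. -/
theorem det_eq_q0_alpha (X : Matrix (Fin 3) (Fin 3) (ZMod 2)) (hX : X = Xᵀ) :
    X.det = q0 (alphaMap X) := by
  rw [IsSymm.det_fin_three_of_charTwo hX.symm, q0_alphaMap]
  simp only [ZMod.pow_card]
end

section
/- For all symmetric 3×3 matrices X, Y over GF(2), B₀(α(X), α(Y)) = det(X + Y) + det X + det Y, where B₀ is the polar form of q₀, i.e., B₀(x,y) = q₀(x+y) + q₀(x) + q₀(y). (Note that α is not linear, so this does not follow trivially from det = q₀ ∘ α.) -/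
open Matrix

/-- The polar form of `q₀`. -/
def B0 (x y : Fin 6 → ZMod 2) : ZMod 2 := q0 (x + y) + q0 x + q0 y

/-!
Since `x² = x` in GF(2), a symmetric `X` has `det X = adf + ae + bf + cd = q₀(α X)`.
The defect `α(X + Y) - α X - α Y` is supported on the coordinates `x₂, x₄, x₆` and is
`B₀`-orthogonal to `α X + α Y` in characteristic 2, so `q₀(α(X + Y)) = q₀(α X + α Y)`.
The theorem is then the definition of `B₀`.
-/

theorem q0_alphaMap_add (X Y : Matrix (Fin 3) (Fin 3) (ZMod 2)) :
    q0 (alphaMap (X + Y)) = q0 (alphaMap X + alphaMap Y) := by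
  simp only [q0, alphaMap, Pi.add_apply, Matrix.add_apply, cons_val]
  ring_nf
  reduce_mod_char

theorem det_eq_q0_alphaMap {X : Matrix (Fin 3) (Fin 3) (ZMod 2)} (hX : X.IsSymm) :
    X.det = q0 (alphaMap X) := by
  have sq_eq_self (x : ZMod 2) : x ^ 2 = x := ZMod.pow_card x
  rw [det_fin_three, hX.apply 0 1, hX.apply 0 2, hX.apply 1 2]
  simp only [q0, alphaMap, cons_val]
  ring_nf
  simp only [sq_eq_self]
  reduce_mod_char

/-- For all symmetric 3×3 matrices `X, Y` over GF(2),
`B₀(α(X), α(Y)) = det(X + Y) + det X + det Y`. -/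
theorem polar_form_det (X Y : Matrix (Fin 3) (Fin 3) (ZMod 2))
    (hX : X = Xᵀ) (hY : Y = Yᵀ) :
    B0 (alphaMap X) (alphaMap Y) = (X + Y).det + X.det + Y.det := by
  have hXsymm : X.IsSymm := hX.symm
  have hYsymm : Y.IsSymm := hY.symm
  rw [B0, ← q0_alphaMap_add, det_eq_q0_alphaMap (hXsymm.add hYsymm),
    det_eq_q0_alphaMap hXsymm, det_eq_q0_alphaMap hYsymm]
end
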